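/- The number of (k+1)-ary increasing trees of size n equals the number of k-Stirling permutations of size n, both given by ∏_{ℓ=1}^{n}(k(ℓ-1)+1). -/

import Mathlib

/-- A `k`-Stirling permutation of size `n`, encoded as a word (list) over `{1,…,n}`. -/
def IsStirlingWord (k n : ℕ) (w : List ℕ) : Prop :=
  w.length = k * n ∧
  (∀ i, 1 ≤ i → i ≤ n → w.count i = k) ∧
  (∀ p q r, p < q → q < r → r < w.length →
    w.getD p 0 = w.getD r 0 → w.getD p 0 ≤ w.getD q 0)

/-- A `(k+1)`-ary increasing tree of size `n`, encoded by assigning to each non-root node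
(the nodes are `0,…,n-1` with labels increasing in the index, root `0`) a pair
(parent, child position among the `k+1` ordered positions); labels increase along
branches (parent index `<` node index) and each (parent, position) pair holds at most
one child. -/
def AryIncTree (k n : ℕ) :=
  {f : {v : Fin n // (v : ℕ) ≠ 0} → Fin n × Fin (k + 1) //
    (∀ v, ((f v).1 : ℕ) < (v.1 : ℕ)) ∧ Function.Injective f}

/-!
A `(k+1)`-ary increasing tree of size `n + 1` is a tree of size `n` together with a free slot
for the leaf `n + 1`: of the `(k+1)n` slots, `n - 1` are occupied, so there are `kn + 1` choices.
A `k`-Stirling permutation of size `n + 1` is a `k`-Stirling permutation of size `n` together with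
one of the `kn + 1` gaps into which the block of `k` copies of `n + 1` is inserted: the copies of
the largest letter are contiguous, since every letter between two of them is at least `n + 1`.
Both counts thus satisfy `c (n + 1) = (kn + 1) c n` with `c 0 = 1`.
-/

namespace List

variable {α : Type*}

def insertBlock (k : ℕ) (a : α) (w : List α) (p : ℕ) : List α :=
  w.take p ++ replicate k a ++ w.drop p

theorem length_insertBlock (k : ℕ) (a : α) {w : List α} {p : ℕ} (hp : p ≤ w.length) :
    (insertBlock k a w p).length = w.length + k := by
  simp only [insertBlock, length_append, length_take, length_replicate, length_drop]
  omega

theorem count_insertBlock [DecidableEq α] (k : ℕ) (a x : α) (w : List α) (p : ℕ) :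
    (insertBlock k a w p).count x = w.count x + if a = x then k else 0 := by
  conv_rhs => rw [← take_append_drop p w]
  simp only [insertBlock, count_append, count_replicate, beq_iff_eq]
  omega

theorem getD_insertBlock (k : ℕ) (a : α) {w : List α} {p : ℕ} (hp : p ≤ w.length) (d : α)
    (i : ℕ) : (insertBlock k a w p).getD i d =
      if i < p then w.getD i d else if i < p + k then a else w.getD (i - k) d := by
  simp only [insertBlock, getD_eq_getElem?_getD]
  split_ifs with h₁ h₂
  · rw [getElem?_append_left (by simp; omega), getElem?_append_left (by simp; omega),
      getElem?_take_of_lt h₁]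
  · rw [getElem?_append_left (by simp; omega), getElem?_append_right (by rw [length_take]; omega)]
    simp [min_eq_left hp, show i - p < k by omega]
  · rw [getElem?_append_right (by simp; omega)]
    simp only [length_append, length_take, length_replicate, getElem?_drop]
    congr 2; omega

theorem filter_insertBlock [DecidableEq α] {k : ℕ} {a : α} {w : List α} (ha : a ∉ w)
    (p : ℕ) : (insertBlock k a w p).filter (· ≠ a) = w := by
  have hw : w.filter (· ≠ a) = w :=
    filter_eq_self.2 fun x hx => decide_eq_true (ne_of_mem_of_not_mem hx ha)
  rw [insertBlock, filter_append, filter_append, filter_replicate_of_neg (by simp), append_nil,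
    ← filter_append, take_append_drop, hw]

theorem idxOf_insertBlock [DecidableEq α] {k : ℕ} (hk : k ≠ 0) {a : α} {w : List α}
    (ha : a ∉ w) {p : ℕ} (hp : p ≤ w.length) : (insertBlock k a w p).idxOf a = p := by
  obtain ⟨j, rfl⟩ := Nat.exists_eq_succ_of_ne_zero hk
  rw [insertBlock, idxOf_append_of_mem (by simp), idxOf_append_of_notMem
    (fun h => ha (mem_of_mem_take h)), replicate_succ, idxOf_cons_self, length_take_of_le hp,
    add_zero]

theorem insertBlock_inj [DecidableEq α] {k : ℕ} (hk : k ≠ 0) {a : α} {w w' : List α}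
    (ha : a ∉ w) (ha' : a ∉ w') {p p' : ℕ} (hp : p ≤ w.length) (hp' : p' ≤ w'.length)
    (h : insertBlock k a w p = insertBlock k a w' p') : w = w' ∧ p = p' :=
  ⟨by rw [← filter_insertBlock ha p, h, filter_insertBlock ha'],
    by rw [← idxOf_insertBlock hk ha hp, h, idxOf_insertBlock hk ha' hp']⟩

theorem exists_eq_replicate_append_of_forall_mem_before {a : α} {r : List α}
    (h : ∀ b c, r = b ++ a :: c → ∀ x ∈ b, x = a) :
    ∃ j b, r = replicate j a ++ b ∧ a ∉ b := by
  induction r with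
  | nil => exact ⟨0, [], rfl, not_mem_nil⟩
  | cons x r ih =>
    by_cases hx : x = a
    · obtain ⟨j, b, rfl, hb⟩ := ih
        fun b c hr y hy => h (x :: b) c (by rw [hr, cons_append]) y (mem_cons_of_mem x hy)
      exact ⟨j + 1, b, by rw [hx, replicate_succ, cons_append], hb⟩
    · refine ⟨0, x :: r, rfl, fun ha => ?_⟩
      obtain ⟨b, c, hr⟩ := append_of_mem ha
      cases b with
      | nil => exact hx (cons_eq_cons.1 hr).1
      | cons y b => exact hx (h (y :: b) c hr x (by simp [(cons_eq_cons.1 hr).1]))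

end List

open List

namespace IsStirlingWord

variable {k n : ℕ} {w : List ℕ}

theorem le_of_mem (hw : IsStirlingWord k n w) {x : ℕ} (hx : x ∈ w) : x ≤ n := by
  classical
  by_contra! hxn
  set s := insert x (Finset.Icc 1 n)
  have hsum : ∑ i ∈ s, w.count i = w.count x + k * n := by
    rw [Finset.sum_insert (by rw [Finset.mem_Icc]; omega),
      Finset.sum_congr rfl fun i hi => hw.2.1 i (Finset.mem_Icc.1 hi).1 (Finset.mem_Icc.1 hi).2]
    simp [mul_comm]
  have htotal : ∑ i ∈ s ∪ w.toFinset, w.count i = w.length := by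
    simpa using Multiset.sum_count_eq_card (m := (w : Multiset ℕ)) (s := s ∪ w.toFinset)
      (by simp_all)
  have hle : ∑ i ∈ s, w.count i ≤ ∑ i ∈ s ∪ w.toFinset, w.count i :=
    Finset.sum_le_sum_of_subset Finset.subset_union_left
  have := count_pos_iff.2 hx
  have := hw.1
  omega

theorem succ_notMem (hw : IsStirlingWord k n w) : n + 1 ∉ w :=
  fun h => (hw.le_of_mem h).not_gt n.lt_succ_self

theorem getD_le (hw : IsStirlingWord k n w) (i : ℕ) : w.getD i 0 ≤ n := by
  rcases lt_or_ge i w.length with h | h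
  · exact hw.le_of_mem (getD_eq_getElem _ _ h ▸ getElem_mem h)
  · rw [getD_eq_default _ _ h]; exact Nat.zero_le n

theorem le_of_mem_between {a b c : List ℕ} {i x : ℕ}
    (hw : IsStirlingWord k n (a ++ i :: b ++ i :: c)) (hx : x ∈ b) : i ≤ x := by
  obtain ⟨j, hj, rfl⟩ := getElem_of_mem hx
  have hp : (a ++ i :: b ++ i :: c).getD a.length 0 = i := by simp [getD_eq_getElem?_getD]
  have hq : (a ++ i :: b ++ i :: c).getD (a.length + (j + 1)) 0 = b[j] := by
    rw [getD_eq_getElem?_getD, append_assoc, getElem?_append_right (by omega)]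
    simp [getElem?_append_left hj, getElem?_eq_getElem hj]
  have hr : (a ++ i :: b ++ i :: c).getD (a.length + (b.length + 1)) 0 = i := by
    simp [getD_eq_getElem?_getD]
  have := hw.2.2 a.length (a.length + (j + 1)) (a.length + (b.length + 1)) (by omega) (by omega)
    (by simp) (hp.trans hr.symm)
  rwa [hp, hq] at this

theorem insertBlock (hw : IsStirlingWord k n w) {p : ℕ} (hp : p ≤ k * n) :
    IsStirlingWord k (n + 1) (w.insertBlock k (n + 1) p) := by
  have hp' : p ≤ w.length := hw.1 ▸ hp
  refine ⟨by rw [length_insertBlock _ _ hp', hw.1, Nat.mul_succ], fun i hi₁ hi₂ => ?_, ?_⟩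
  · rw [count_insertBlock]
    rcases Nat.le_succ_iff.1 hi₂ with hi | rfl
    · rw [hw.2.1 i hi₁ hi, if_neg (by omega), add_zero]
    · rw [count_eq_zero_of_not_mem hw.succ_notMem, if_pos rfl, zero_add]
  · intro P Q R hPQ hQR hR hPR
    rw [length_insertBlock _ _ hp'] at hR
    have := hw.getD_le P; have := hw.getD_le Q; have := hw.getD_le R
    have := hw.getD_le (P - k); have := hw.getD_le (Q - k); have := hw.getD_le (R - k)
    simp only [getD_insertBlock _ _ hp'] at hPR ⊢
    split_ifs at hPR ⊢ <;> first
      | omega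
      | exact hw.2.2 _ _ _ (by omega) (by omega) (by omega) hPR

theorem of_insertBlock {p : ℕ} (hp : p ≤ w.length)
    (hw : IsStirlingWord k (n + 1) (w.insertBlock k (n + 1) p)) : IsStirlingWord k n w := by
  obtain ⟨hlen, hcount, hcond⟩ := hw
  rw [length_insertBlock _ _ hp, Nat.mul_succ] at hlen
  refine ⟨by omega, fun i hi₁ hi₂ => ?_, fun P Q R hPQ hQR hR hPR => ?_⟩
  · simpa [count_insertBlock, show n + 1 ≠ i by omega] using hcount i hi₁ (by omega)
  · let e i := if i < p then i else i + k
    have he : ∀ i, (w.insertBlock k (n + 1) p).getD (e i) 0 = w.getD i 0 := fun i => by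
      rw [getD_insertBlock _ _ hp]
      by_cases hi : i < p
      · simp [e, hi]
      · simp [e, hi, show ¬ i + k < p by omega]
    have := hcond (e P) (e Q) (e R) (by grind) (by grind)
      (by rw [length_insertBlock _ _ hp]; grind) (by rw [he, he]; exact hPR)
    rwa [he, he] at this

theorem exists_eq_append_replicate_append (hk : 0 < k) (hw : IsStirlingWord k (n + 1) w) :
    ∃ a b, n + 1 ∉ a ∧ n + 1 ∉ b ∧ w = a ++ replicate k (n + 1) ++ b := by
  have hcount := hw.2.1 (n + 1) (by omega) le_rfl
  obtain ⟨a, r, ha, rfl, -⟩ := exists_erase_eq (count_pos_iff.1 (hcount ▸ hk))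
  have hbetween : ∀ b c, r = b ++ (n + 1) :: c → ∀ x ∈ b, x = n + 1 := by
    rintro b c rfl x hx
    rw [← cons_append, ← append_assoc] at hw
    exact le_antisymm (hw.le_of_mem (by simp [hx])) (hw.le_of_mem_between hx)
  obtain ⟨j, b, rfl, hb⟩ := exists_eq_replicate_append_of_forall_mem_before hbetween
  have hj : j + 1 = k := by
    simpa [count_replicate, count_eq_zero_of_not_mem ha, count_eq_zero_of_not_mem hb] using hcount
  exact ⟨a, b, ha, hb, by simp [← hj, replicate_succ]⟩

theorem card_zero (k : ℕ) : Nat.card {w // IsStirlingWord k 0 w} = 1 :=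
  Nat.card_eq_one_iff_exists.2
    ⟨⟨[], rfl, fun _ h₁ h₀ => by omega, fun _ _ _ _ _ h => by simp at h⟩,
    fun w => Subtype.ext (length_eq_zero_iff.1 w.2.1)⟩

theorem card_succ (hk : 0 < k) (n : ℕ) :
    Nat.card {w // IsStirlingWord k (n + 1) w} =
      Nat.card {w // IsStirlingWord k n w} * (k * n + 1) := by
  let f : {w // IsStirlingWord k n w} × Fin (k * n + 1) → {w // IsStirlingWord k (n + 1) w} :=
    fun x => ⟨x.1.1.insertBlock k (n + 1) x.2, x.1.2.insertBlock (Nat.lt_succ_iff.1 x.2.2)⟩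
  have hf : Function.Bijective f := by
    constructor
    · rintro ⟨⟨w, hw⟩, p⟩ ⟨⟨w', hw'⟩, p'⟩ h
      simp only [f, Subtype.mk.injEq] at h
      have := hw.1; have := hw'.1; have := p.2; have := p'.2
      obtain ⟨rfl, hpp'⟩ := insertBlock_inj hk.ne' hw.succ_notMem hw'.succ_notMem (by omega)
        (by omega) h
      rw [Fin.ext hpp']
    · rintro ⟨w, hw⟩
      obtain ⟨a, b, ha, hb, rfl⟩ := hw.exists_eq_append_replicate_append hk
      have hab : (a ++ b).insertBlock k (n + 1) a.length = a ++ replicate k (n + 1) ++ b := by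
        simp [List.insertBlock]
      have hab' : IsStirlingWord k n (a ++ b) := of_insertBlock (by simp) (hab ▸ hw)
      have hlen := hab'.1
      rw [length_append] at hlen
      exact ⟨(⟨a ++ b, hab'⟩, ⟨a.length, by omega⟩), Subtype.ext hab⟩
  rw [← Nat.card_congr (Equiv.ofBijective f hf), Nat.card_prod, Nat.card_fin]

end IsStirlingWord

abbrev NonRoot (n : ℕ) := {v : Fin n // (v : ℕ) ≠ 0}

namespace NonRoot

theorem card (n : ℕ) : Nat.card (NonRoot n) = n - 1 := by
  rcases n with _ | n
  · simp
  · simp [Nat.card_eq_fintype_card, Fintype.card_subtype, Finset.filter_ne']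

def castSucc {n : ℕ} (v : NonRoot n) : NonRoot (n + 1) := ⟨v.1.castSucc, v.2⟩

theorem castSucc_injective {n : ℕ} : Function.Injective (castSucc (n := n)) :=
  fun _ _ h => Subtype.ext (Fin.castSucc_injective _ (congrArg Subtype.val h))

def last {n : ℕ} (hn : n ≠ 0) : NonRoot (n + 1) := ⟨Fin.last n, hn⟩

theorem eq_castSucc_or_eq_last {n : ℕ} (hn : n ≠ 0) (v : NonRoot (n + 1)) :
    (∃ u, v = castSucc u) ∨ v = last hn := by
  by_cases h : (v.1 : ℕ) < n
  · exact Or.inl ⟨⟨v.1.castLT h, v.2⟩, rfl⟩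
  · exact Or.inr (Subtype.ext (Fin.ext (by have := v.1.2; show (v.1 : ℕ) = n; omega)))

end NonRoot

namespace AryIncTree

variable {k n : ℕ}

def castSuccSlot : Fin n × Fin (k + 1) → Fin (n + 1) × Fin (k + 1) :=
  Prod.map Fin.castSucc id

theorem castSuccSlot_injective : Function.Injective (castSuccSlot (n := n) (k := k)) :=
  Fin.castSucc_injective n |>.prodMap Function.injective_id

theorem card_compl_range (hn : n ≠ 0) (t : AryIncTree k n) :
    Nat.card ↥(Set.range t.1)ᶜ = k * n + 1 := by
  rw [Nat.card_coe_set_eq, Set.ncard_compl, Set.ncard_range_of_injective t.2.2, NonRoot.card]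
  rw [Nat.card_prod, Nat.card_fin, Nat.card_fin, Nat.mul_succ, Nat.mul_comm n k]
  omega

theorem card_of_le_one (hn : n ≤ 1) : Nat.card (AryIncTree k n) = 1 := by
  have : IsEmpty (NonRoot n) := ⟨fun v => v.2 (by omega)⟩
  exact Nat.card_eq_one_iff_exists.2 ⟨⟨isEmptyElim, isEmptyElim, fun v => isEmptyElim v⟩,
    fun t => Subtype.ext (funext isEmptyElim)⟩

def restrict (t : AryIncTree k (n + 1)) : AryIncTree k n :=
  ⟨fun u => ((t.1 (NonRoot.castSucc u)).1.castLT (lt_trans (t.2.1 _) u.1.2),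
      (t.1 (NonRoot.castSucc u)).2),
    fun u => t.2.1 (NonRoot.castSucc u),
    fun u u' h => by
      have h₁ := congrArg (fun x => (x.1 : ℕ)) h
      have h₂ := congrArg Prod.snd h
      exact NonRoot.castSucc_injective (t.2.2 (Prod.ext (Fin.ext h₁) h₂))⟩

theorem castSuccSlot_restrict (t : AryIncTree k (n + 1)) (u : NonRoot n) :
    castSuccSlot ((restrict t).1 u) = t.1 (NonRoot.castSucc u) :=
  Prod.ext (Fin.castSucc_castLT _ _) rfl

def lastSlot (hn : n ≠ 0) (t : AryIncTree k (n + 1)) : Fin n × Fin (k + 1) :=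
  ((t.1 (NonRoot.last hn)).1.castLT (t.2.1 _), (t.1 (NonRoot.last hn)).2)

theorem castSuccSlot_lastSlot (hn : n ≠ 0) (t : AryIncTree k (n + 1)) :
    castSuccSlot (lastSlot hn t) = t.1 (NonRoot.last hn) :=
  Prod.ext (Fin.castSucc_castLT _ _) rfl

theorem lastSlot_notMem_range (hn : n ≠ 0) (t : AryIncTree k (n + 1)) :
    lastSlot hn t ∉ Set.range (restrict t).1 := by
  rintro ⟨u, hu⟩
  have := t.2.2 ((castSuccSlot_restrict t u).symm.trans
    ((congrArg _ hu).trans (castSuccSlot_lastSlot hn t)))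
  exact u.1.2.ne (congrArg (fun v => (v.1 : ℕ)) this)

def extend (t : AryIncTree k n) (s : Fin n × Fin (k + 1)) (hs : s ∉ Set.range t.1) :
    AryIncTree k (n + 1) :=
  ⟨fun v => if h : (v.1 : ℕ) < n then castSuccSlot (t.1 ⟨v.1.castLT h, v.2⟩)
      else castSuccSlot s,
    fun v => by
      dsimp only
      split_ifs with h
      · exact t.2.1 _
      · exact s.1.2.trans_le (not_lt.1 h),
    fun v v' h => by
      have := v.1.2; have := v'.1.2
      dsimp only at h
      split_ifs at h with hv hv'
      · have := congrArg (fun u => (u.1 : ℕ)) (t.2.2 (castSuccSlot_injective h))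
        exact Subtype.ext (Fin.ext this)
      · exact absurd ⟨_, castSuccSlot_injective h⟩ hs
      · exact absurd ⟨_, (castSuccSlot_injective h).symm⟩ hs
      · exact Subtype.ext (Fin.ext (by omega))⟩

theorem extend_apply_castSucc (t : AryIncTree k n) (s : Fin n × Fin (k + 1))
    (hs : s ∉ Set.range t.1) (u : NonRoot n) :
    (extend t s hs).1 (NonRoot.castSucc u) = castSuccSlot (t.1 u) :=
  dif_pos u.1.2

theorem extend_apply_last (hn : n ≠ 0) (t : AryIncTree k n) (s : Fin n × Fin (k + 1))
    (hs : s ∉ Set.range t.1) : (extend t s hs).1 (NonRoot.last hn) = castSuccSlot s :=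
  dif_neg (lt_irrefl n)

def succEquiv (hn : n ≠ 0) :
    AryIncTree k (n + 1) ≃ Σ t : AryIncTree k n, ↥(Set.range t.1)ᶜ where
  toFun t := ⟨restrict t, lastSlot hn t, lastSlot_notMem_range hn t⟩
  invFun x := extend x.1 x.2.1 x.2.2
  left_inv t := by
    refine Subtype.ext (funext fun v => ?_)
    obtain ⟨u, rfl⟩ | rfl := NonRoot.eq_castSucc_or_eq_last hn v
    · rw [extend_apply_castSucc, castSuccSlot_restrict]
    · rw [extend_apply_last, castSuccSlot_lastSlot]
  right_inv x := by
    refine Sigma.subtype_ext (Subtype.ext (funext fun u => castSuccSlot_injective ?_))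
      (castSuccSlot_injective ?_)
    · rw [castSuccSlot_restrict, extend_apply_castSucc]
    · rw [castSuccSlot_lastSlot, extend_apply_last]

theorem card_succ (n : ℕ) :
    Nat.card (AryIncTree k (n + 1)) = Nat.card (AryIncTree k n) * (k * n + 1) := by
  rcases Nat.eq_zero_or_pos n with rfl | hn
  · simp [card_of_le_one]
  rw [Nat.card_congr ((succEquiv hn.ne').trans ((Equiv.sigmaCongrRight fun t =>
    Finite.equivFinOfCardEq (card_compl_range hn.ne' t)).trans (Equiv.sigmaEquivProd _ _))),
    Nat.card_prod, Nat.card_fin]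

end AryIncTree

theorem eq_prod_Icc_of_succ {k : ℕ} {c : ℕ → ℕ} (h₀ : c 0 = 1)
    (hsucc : ∀ n, c (n + 1) = c n * (k * n + 1)) (n : ℕ) :
    c n = ∏ ℓ ∈ Finset.Icc 1 n, (k * (ℓ - 1) + 1) := by
  induction n with
  | zero => simp [h₀]
  | succ n ih => rw [hsucc, ih, Finset.prod_Icc_succ_top (by omega), Nat.add_sub_cancel]

theorem ary_tree_eq_stirling_count_general (k n : ℕ) (hk : 1 ≤ k) :
    Nat.card (AryIncTree k n) = ∏ ℓ ∈ Finset.Icc 1 n, (k * (ℓ - 1) + 1) ∧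
    Nat.card {w : List ℕ // IsStirlingWord k n w} =
      ∏ ℓ ∈ Finset.Icc 1 n, (k * (ℓ - 1) + 1) :=
  ⟨eq_prod_Icc_of_succ (c := fun n => Nat.card (AryIncTree k n))
      (AryIncTree.card_of_le_one zero_le_one) AryIncTree.card_succ n,
    eq_prod_Icc_of_succ (c := fun n => Nat.card {w : List ℕ // IsStirlingWord k n w})
      (IsStirlingWord.card_zero k) (IsStirlingWord.card_succ hk) n⟩

/-- The numbers of `(k+1)`-ary increasing trees of size `n` and of `k`-Stirling
permutations of size `n` are both `∏_{ℓ=1}^{n}(k(ℓ-1)+1)`. -/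
theorem ary_tree_eq_stirling_count (k n : ℕ) (hk : 1 ≤ k) (hn : 1 ≤ n) :
    Nat.card (AryIncTree k n) = ∏ ℓ ∈ Finset.Icc 1 n, (k * (ℓ - 1) + 1) ∧
    Nat.card {w : List ℕ // IsStirlingWord k n w} =
      ∏ ℓ ∈ Finset.Icc 1 n, (k * (ℓ - 1) + 1) :=
  ary_tree_eq_stirling_count_general k n hk
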